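/- arXiv:1302.0080 — 4 statements merged into one kernel-verified Lean document; each statement's English description precedes it below -/
import Mathlib

section
/- The complete bipartite graph K_{3,3} has path width at most 3 but vertex width strictly greater than 3; in particular path width and vertex width are not equal in general. -/
open scoped Classical

/-- The set of vertices incident both to one of the first `i` edges and to one of the
remaining edges, for the edge order given by the enumeration `ends : Fin m → Sym2 V`. -/
noncomputable def cutVerts {V : Type*} [Fintype V] (m : ℕ) (ends : Fin m → Sym2 V)
    (i : ℕ) : Finset V :=
  Finset.univ.filter fun v =>
    (∃ j : Fin m, (j : ℕ) < i ∧ v ∈ ends j) ∧ (∃ j : Fin m, i ≤ (j : ℕ) ∧ v ∈ ends j)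

/-- `B : Fin (k+1) → Finset V` is a path decomposition of the graph with edges
`ends : Fin m → Sym2 V`. -/
def IsPathDecomp {V : Type*} (m : ℕ) (ends : Fin m → Sym2 V) (k : ℕ)
    (B : Fin (k + 1) → Finset V) : Prop :=
  (∀ j : Fin m, ∃ i, ∀ v ∈ ends j, v ∈ B i) ∧
  (∀ v : V, ∀ i₁ i₂ i₃ : Fin (k + 1), i₁ ≤ i₂ → i₂ ≤ i₃ →
    v ∈ B i₁ → v ∈ B i₃ → v ∈ B i₂)

/-- membership in the `j`-th canonical edge of `K_{3,3}`. -/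
def inEdge (j : Fin 9) (v : Fin 3 ⊕ Fin 3) : Bool :=
  match v with
  | Sum.inl a => a.val = j.val / 3
  | Sum.inr b => b.val = j.val % 3

/-- canonical enumeration of the edges of `K_{3,3}`. -/
def canE (j : Fin 9) : Sym2 (Fin 3 ⊕ Fin 3) :=
  s(Sum.inl ⟨j.val / 3, by omega⟩, Sum.inr ⟨j.val % 3, by omega⟩)

lemma mem_canE (j : Fin 9) (v : Fin 3 ⊕ Fin 3) : v ∈ canE j ↔ inEdge j v := by
  revert j v; decide

lemma canE_inj : Function.Injective canE := by decide

lemma edgeSet_eq (e : Sym2 (Fin 3 ⊕ Fin 3)) :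
    e ∈ (completeBipartiteGraph (Fin 3) (Fin 3)).edgeSet ↔ ∃ j, canE j = e := by
  induction e using Sym2.ind with
  | _ a b =>
    rw [SimpleGraph.mem_edgeSet]
    show ((a.isLeft ∧ b.isRight) ∨ (a.isRight ∧ b.isLeft)) ↔ _
    revert a b; decide

lemma canE_mem_edgeSet (j : Fin 9) :
    canE j ∈ (completeBipartiteGraph (Fin 3) (Fin 3)).edgeSet :=
  (edgeSet_eq _).mpr ⟨j, rfl⟩

set_option maxRecDepth 10000 in
lemma cut_core : ∀ f : Fin 9 → Bool,
    (Finset.univ.filter fun j => f j).card = 4 →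
    4 ≤ (Finset.univ.filter fun v : Fin 3 ⊕ Fin 3 =>
      (∃ j, f j ∧ inEdge j v) ∧ (∃ j, ¬ f j ∧ inEdge j v)).card := by decide

def decompB : Fin 3 → Finset (Fin 3 ⊕ Fin 3) :=
  fun i => {Sum.inl 0, Sum.inl 1, Sum.inl 2, Sum.inr i}

lemma decomp_ok : IsPathDecomp 9 canE 2 decompB ∧ ∀ i, (decompB i).card ≤ 4 := by
  constructor
  · constructor
    · decide
    · decide
  · decide


/-- `K_{3,3}` has path width at most `3` but vertex width strictly greater than `3`:
there is a path decomposition of `K_{3,3}` with all parts of size at most `4`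
(width at most `3`), but for every total order on the `9` edges of `K_{3,3}`
(an injective enumeration of all the edges) some cut set `V_i` has at least `4`
vertices.  In particular path width and vertex width differ for `K_{3,3}`. -/
theorem K33_pathwidth_lt_vertexwidth :
    (∃ (ends : Fin 9 → Sym2 (Fin 3 ⊕ Fin 3)),
      Function.Injective ends ∧
      (∀ j, ends j ∈ (completeBipartiteGraph (Fin 3) (Fin 3)).edgeSet) ∧
      (∀ e ∈ (completeBipartiteGraph (Fin 3) (Fin 3)).edgeSet, ∃ j, ends j = e) ∧
      ∃ (k : ℕ) (B : Fin (k + 1) → Finset (Fin 3 ⊕ Fin 3)),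
        IsPathDecomp 9 ends k B ∧ ∀ i, (B i).card ≤ 4) ∧
    (∀ ends : Fin 9 → Sym2 (Fin 3 ⊕ Fin 3),
      Function.Injective ends →
      (∀ j, ends j ∈ (completeBipartiteGraph (Fin 3) (Fin 3)).edgeSet) →
      (∀ e ∈ (completeBipartiteGraph (Fin 3) (Fin 3)).edgeSet, ∃ j, ends j = e) →
      ∃ i ≤ 9, 4 ≤ (cutVerts 9 ends i).card) := by
  constructor
  · exact ⟨canE, canE_inj, canE_mem_edgeSet,
      fun e he => (edgeSet_eq e).mp he, 2, decompB, decomp_ok.1, decomp_ok.2⟩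
  · intro ends hinj hmem hsurj
    refine ⟨4, by norm_num, ?_⟩
    -- index of `ends j` in the canonical enumeration
    have hg : ∀ j : Fin 9, ∃ c, canE c = ends j := fun j => (edgeSet_eq _).mp (hmem j)
    choose g hgc using hg
    have hginj : Function.Injective g := fun a b hab => by
      apply hinj; rw [← hgc, ← hgc, hab]
    set f : Fin 9 → Bool := fun c => decide (∃ j : Fin 9, (j : ℕ) < 4 ∧ g j = c) with hf
    have hfcard : (Finset.univ.filter fun c => f c).card = 4 := by
      have : (Finset.univ.filter fun c => f c)
          = (Finset.univ.filter fun j : Fin 9 => (j : ℕ) < 4).image g := by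
        ext c
        simp only [Finset.mem_filter, Finset.mem_image, Finset.mem_univ, true_and, hf,
          decide_eq_true_eq]
      rw [this, Finset.card_image_of_injective _ hginj]
      decide
    have hsub : (Finset.univ.filter fun v : Fin 3 ⊕ Fin 3 =>
        (∃ c, f c ∧ inEdge c v) ∧ (∃ c, ¬ f c ∧ inEdge c v)) ⊆ cutVerts 9 ends 4 := by
      intro v hv
      simp only [Finset.mem_filter, Finset.mem_univ, true_and] at hv
      obtain ⟨⟨c₁, hc₁, hin₁⟩, ⟨c₂, hc₂, hin₂⟩⟩ := hv
      simp only [cutVerts, Finset.mem_filter, Finset.mem_univ, true_and]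
      constructor
      · rw [hf, decide_eq_true_eq] at hc₁
        obtain ⟨j, hj, rfl⟩ := hc₁
        exact ⟨j, hj, by rw [← hgc]; exact (mem_canE _ _).mpr hin₁⟩
      · obtain ⟨j, hj⟩ := hsurj (canE c₂) (canE_mem_edgeSet c₂)
        have hgj : g j = c₂ := canE_inj (by rw [hgc, hj])
        refine ⟨j, ?_, by rw [hj]; exact (mem_canE _ _).mpr hin₂⟩
        by_contra h
        push_neg at h
        exact hc₂ (by rw [hf]; simp only [decide_eq_true_eq]; exact ⟨j, h, hgj⟩)
    calc 4 ≤ _ := cut_core f hfcard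
    _ ≤ (cutVerts 9 ends 4).card := Finset.card_le_card hsub
end

section
/- If {i,j,k} is a 3-edge cut set of a connected graph G and {i,j,k} ⊆ I, then the Dodgson polynomial Ψ^{I,J}_{G,K} = 0. Consequently, if {i,j} ⊆ I and k ∉ I ∪ J ∪ K, then Ψ^{I,J}_{G,K} is independent of the variable a_k. -/
open Finset

/-- Two vertices are joined by some edge in `S` (edges given by `head`/`tail` maps). -/
def MGAdj {V E : Type*} (head tail : E → V) (S : Set E) (a b : V) : Prop :=
  ∃ e ∈ S, (head e = a ∧ tail e = b) ∨ (head e = b ∧ tail e = a)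

/-- Reachability using only edges in `S`. -/
def MGReach {V E : Type*} (head tail : E → V) (S : Set E) : V → V → Prop :=
  Relation.ReflTransGen (MGAdj head tail S)

/-- Number of connected components of the graph on all of `V` with edge set `S`. -/
noncomputable def MGncomp {V E : Type*} (head tail : E → V) (S : Set E) : ℕ :=
  Nat.card (Quotient (Relation.EqvGen.setoid (MGAdj head tail S)))

/-- Degree of a vertex (loops counted twice). -/
def MGdeg {V E : Type*} [Fintype E] [DecidableEq V] (head tail : E → V) (v : V) : ℕ :=
  ∑ e : E, ((if head e = v then 1 else 0) + (if tail e = v then 1 else 0))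

open scoped Classical

/-- The reduced oriented incidence matrix: the row of the vertex `v₀` removed. -/
noncomputable def redInc {V E : Type*} [DecidableEq V] (R : Type*) [CommRing R]
    (head tail : E → V) (v₀ : V) : Matrix {u : V // u ≠ v₀} E R :=
  Matrix.of fun u e => (if head e = u.1 then 1 else 0) - (if tail e = u.1 then 1 else 0)

/-- The expanded Laplacian-type matrix `M = [[Λ, Ẽᵀ],[−Ẽ, 0]]` with `Λ` the diagonal
matrix of edge variables and `Ẽ` the reduced oriented incidence matrix. -/
noncomputable def bigM {V E : Type*} [Fintype V] [Fintype E] [DecidableEq V]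
    (head tail : E → V) (v₀ : V) :
    Matrix (E ⊕ {u : V // u ≠ v₀}) (E ⊕ {u : V // u ≠ v₀}) (MvPolynomial E ℚ) :=
  Matrix.fromBlocks (Matrix.diagonal fun e => MvPolynomial.X e)
    (redInc _ head tail v₀).transpose (-(redInc _ head tail v₀)) 0

/-- A bijection between the complements of two equinumerous finsets. -/
noncomputable def notMemEquiv {E : Type*} [Fintype E] [DecidableEq E] (I J : Finset E)
    (h : I.card = J.card) : {e : E // e ∉ I} ≃ {e : E // e ∉ J} :=
  Fintype.equivOfCardEq (by
    rw [Fintype.card_subtype_compl, Fintype.card_subtype_compl,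
      Fintype.card_coe, Fintype.card_coe, h])

/-- The Dodgson polynomial `Ψ^{I,J}_{G,K}`: the determinant of `M` with the rows
indexed by `I` and the columns indexed by `J` (among the edge rows/columns) removed,
with the variables `a_i`, `i ∈ K`, set to `0`. -/
noncomputable def dodgson {V E : Type*} [Fintype V] [Fintype E] [DecidableEq V]
    [DecidableEq E] (head tail : E → V) (v₀ : V) (I J K : Finset E)
    (h : I.card = J.card) : MvPolynomial E ℚ :=
  MvPolynomial.bind₁ (fun i => if i ∈ K then 0 else MvPolynomial.X i)
    (Matrix.det (Matrix.of
      fun (r c : {e : E // e ∉ I} ⊕ {u : V // u ≠ v₀}) =>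
        bigM head tail v₀ (Sum.map Subtype.val id r)
          (Sum.map (fun x => ((notMemEquiv I J h x : {e : E // e ∉ J}) : E)) id c)))

/-!
If the edges outside `T` do not connect `G`, the indicator of the vertices that cannot reach
`v₀` avoiding `T` is a kernel vector of every matrix `[[*, Bᵀ], [*, 0]]` whose rows of `Bᵀ`
are incidence rows of edges outside `T` or zero: such an edge has both ends on the same side.
With `T = {i, j, k} ⊆ I` this kills the Dodgson matrix. If only `i, j ∈ I` and `k ∉ I ∪ J`,
the variable `a_k` occurs in a single entry, in row `k`; splitting that row as
`a_k • (unit vector) + (row without a_k)` writes the determinant as `a_k` times one which vanishes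
by the same argument, plus one free of `a_k`; and setting `a_k = 0` commutes with setting the
variables of `K` to zero.
-/

open Matrix MvPolynomial Sum

section

variable {V E : Type*} {head tail : E → V}

theorem MGAdj.symm {S : Set E} {a b : V} (h : MGAdj head tail S a b) :
    MGAdj head tail S b a := by
  obtain ⟨e, he, h | h⟩ := h
  exacts [⟨e, he, Or.inr h⟩, ⟨e, he, Or.inl h⟩]

theorem MGReach.symm {S : Set E} {a b : V} (h : MGReach head tail S a b) :
    MGReach head tail S b a := by
  induction h with
  | refl => exact .refl
  | tail _ hbc ih => exact .head hbc.symm ih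

theorem MGReach.head_iff_tail {S : Set E} {e : E} (he : e ∈ S) {v : V} :
    MGReach head tail S (head e) v ↔ MGReach head tail S (tail e) v :=
  ⟨.head ⟨e, he, Or.inr ⟨rfl, rfl⟩⟩, .head ⟨e, he, Or.inl ⟨rfl, rfl⟩⟩⟩

theorem exists_not_MGReach {S : Set E} (hS : ¬ ∀ u w, MGReach head tail S u w) (v₀ : V) :
    ∃ u, ¬ MGReach head tail S u v₀ := by
  by_contra! hall
  exact hS fun u w => (hall u).trans (hall w).symm

theorem sum_redInc_mul [Fintype V] [DecidableEq V] {R : Type*} [CommRing R] (v₀ : V)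
    (f : V → R) (hf : f v₀ = 0) (e : E) :
    ∑ u, redInc R head tail v₀ u e * f u = f (head e) - f (tail e) := by
  have h := Fintype.sum_eq_add_sum_subtype_ne
    (fun u => ((if head e = u then 1 else 0) - (if tail e = u then 1 else 0) : R) * f u) v₀
  simpa [redInc, hf, sub_mul, ite_mul, Finset.sum_sub_distrib] using h.symm

theorem det_eq_zero_of_not_connected [Fintype V] [DecidableEq V] {R : Type*} [CommRing R]
    {α : Type*} [Fintype α] [DecidableEq α] {S : Set E} (hS : ¬ ∀ u w, MGReach head tail S u w)
    {v₀ : V} (A : Matrix (α ⊕ {u : V // u ≠ v₀}) (α ⊕ {u : V // u ≠ v₀}) R)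
    (hedge : ∀ a, (∀ u, A (inl a) (inr u) = 0) ∨
      ∃ e ∈ S, ∀ u, A (inl a) (inr u) = redInc R head tail v₀ u e)
    (hvert : ∀ w u, A (inr w) (inr u) = 0) :
    A.det = 0 := by
  let f : V → R := fun v => if MGReach head tail S v v₀ then 0 else 1
  have hf₀ : f v₀ = 0 := if_pos .refl
  have hf_edge : ∀ e ∈ S, f (head e) = f (tail e) := fun _ he =>
    if_congr (MGReach.head_iff_tail he) rfl rfl
  obtain ⟨u₁, hu₁⟩ := exists_not_MGReach hS v₀
  have hu₁v₀ : u₁ ≠ v₀ := by rintro rfl; exact hu₁ .refl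
  let c : α ⊕ {u : V // u ≠ v₀} → R := Sum.elim 0 fun u => f u
  refine det_eq_zero_of_mulVec_eq_zero_of_mem_nonZeroDivisors (v := c) (i := inr ⟨u₁, hu₁v₀⟩)
    ?_ (by simp [c, f, hu₁, one_mem])
  funext r
  rcases r with a | w
  · rcases hedge a with h | ⟨e, he, h⟩
    · simp [mulVec, dotProduct, c, h]
    · simp [mulVec, dotProduct, c, h, sum_redInc_mul v₀ f hf₀, hf_edge e he]
  · simp [mulVec, dotProduct, c, hvert]

theorem bind₁_ite_X_comm {σ R : Type*} [CommSemiring R] (P Q : σ → Prop) [DecidablePred P]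
    [DecidablePred Q] (p : MvPolynomial σ R) :
    bind₁ (fun e => if P e then 0 else X e) (bind₁ (fun e => if Q e then 0 else X e) p) =
      bind₁ (fun e => if Q e then 0 else X e) (bind₁ (fun e => if P e then 0 else X e) p) := by
  rw [← AlgHom.comp_apply, ← AlgHom.comp_apply]
  congr 1
  ext e
  by_cases P e <;> by_cases Q e <;> simp [*]

section Dodgson

variable [Fintype V] [Fintype E] [DecidableEq V] [DecidableEq E]

theorem bind₁_bigM (v₀ : V) (k : E) (x y : E ⊕ {u : V // u ≠ v₀}) :
    bind₁ (fun e => if e = k then 0 else (X e : MvPolynomial E ℚ)) (bigM head tail v₀ x y) =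
      if x = inl k ∧ y = inl k then 0 else bigM head tail v₀ x y := by
  rcases x with e | w <;> rcases y with f | u
  · by_cases hef : e = f
    · subst hef
      by_cases hek : e = k <;> simp [bigM, hek]
    · simp [bigM, hef]
  all_goals simp [bigM, redInc]

noncomputable def dodgsonMatrix (head tail : E → V) (v₀ : V) (I J : Finset E)
    (h : I.card = J.card) :
    Matrix ({e : E // e ∉ I} ⊕ {u : V // u ≠ v₀}) ({e : E // e ∉ I} ⊕ {u : V // u ≠ v₀})
      (MvPolynomial E ℚ) :=
  Matrix.of fun r c => bigM head tail v₀ (Sum.map Subtype.val id r)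
    (Sum.map (fun x => ((notMemEquiv I J h x : {e : E // e ∉ J}) : E)) id c)

theorem dodgson_eq_bind₁_det (v₀ : V) (I J K : Finset E) (h : I.card = J.card) :
    dodgson head tail v₀ I J K h =
      bind₁ (fun i => if i ∈ K then 0 else X i) (dodgsonMatrix head tail v₀ I J h).det :=
  rfl

variable {v₀ : V} {I J : Finset E} {h : I.card = J.card}

@[simp]
theorem dodgsonMatrix_inl_inr (a : {e : E // e ∉ I}) (u : {u : V // u ≠ v₀}) :
    dodgsonMatrix head tail v₀ I J h (inl a) (inr u) =
      redInc (MvPolynomial E ℚ) head tail v₀ u a := by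
  simp [dodgsonMatrix, bigM]

@[simp]
theorem dodgsonMatrix_inr_inr (w u : {u : V // u ≠ v₀}) :
    dodgsonMatrix head tail v₀ I J h (inr w) (inr u) = 0 := by
  simp [dodgsonMatrix, bigM]

theorem det_dodgsonMatrix_eq_zero {T : Set E} (hT : ¬ ∀ u w, MGReach head tail Tᶜ u w)
    (hTI : T ⊆ I) : (dodgsonMatrix head tail v₀ I J h).det = 0 :=
  det_eq_zero_of_not_connected hT _
    (fun a => .inr ⟨a, fun haT => a.2 (hTI haT), fun _ => dodgsonMatrix_inl_inr _ _⟩)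
    dodgsonMatrix_inr_inr

theorem det_updateRow_dodgsonMatrix_eq_zero {T : Set E}
    (hT : ¬ ∀ u w, MGReach head tail Tᶜ u w)
    {k : E} (hkI : k ∉ I) (hTI : T ⊆ insert k I)
    (x : {e : E // e ∉ I} ⊕ {u : V // u ≠ v₀} → MvPolynomial E ℚ) (hx : ∀ u, x (inr u) = 0) :
    ((dodgsonMatrix head tail v₀ I J h).updateRow (inl ⟨k, hkI⟩) x).det = 0 := by
  refine det_eq_zero_of_not_connected hT _ (fun a => ?_) (fun w u => ?_)
  · by_cases hak : a = ⟨k, hkI⟩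
    · subst hak
      exact .inl fun u => by simp [hx]
    · refine .inr ⟨a, fun haT => ?_, fun u => ?_⟩
      · rcases hTI haT with hak' | haI
        exacts [hak (Subtype.ext hak'), a.2 haI]
      · simp [updateRow_ne (inl_injective.ne hak)]
  · simp

theorem bind₁_dodgsonMatrix {k : E} (hkI : k ∉ I) (hkJ : k ∉ J) (r c) :
    bind₁ (fun e => if e = k then 0 else (X e : MvPolynomial E ℚ))
        (dodgsonMatrix head tail v₀ I J h r c) =
      if r = inl ⟨k, hkI⟩ ∧ c = inl ((notMemEquiv I J h).symm ⟨k, hkJ⟩) then 0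
      else dodgsonMatrix head tail v₀ I J h r c := by
  rw [dodgsonMatrix, of_apply, bind₁_bigM]
  congr 1
  rcases r with a | w <;> rcases c with b | u <;>
    simp [Subtype.ext_iff, Equiv.eq_symm_apply]

theorem bind₁_det_dodgsonMatrix {T : Set E} (hT : ¬ ∀ u w, MGReach head tail Tᶜ u w)
    {k : E} (hkI : k ∉ I) (hkJ : k ∉ J) (hTI : T ⊆ insert k I) :
    bind₁ (fun e => if e = k then 0 else (X e : MvPolynomial E ℚ))
        (dodgsonMatrix head tail v₀ I J h).det =
      (dodgsonMatrix head tail v₀ I J h).det := by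
  set N := dodgsonMatrix head tail v₀ I J h
  set F := bind₁ (fun e => if e = k then 0 else (X e : MvPolynomial E ℚ))
  set r₀ : {e : E // e ∉ I} ⊕ {u : V // u ≠ v₀} := inl ⟨k, hkI⟩
  set c₀ : {e : E // e ∉ I} ⊕ {u : V // u ≠ v₀} := inl ((notMemEquiv I J h).symm ⟨k, hkJ⟩)
  have hFN : N.map F = N.updateRow r₀ (N.map F r₀) := by
    refine Matrix.ext fun r c => ?_
    by_cases hr : r = r₀
    · rw [hr, updateRow_self]
    · rw [updateRow_ne hr, map_apply, bind₁_dodgsonMatrix hkI hkJ, if_neg fun h' => hr h'.1]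
  have hrow : N r₀ = X k • Pi.single c₀ 1 + N.map F r₀ := by
    funext c
    by_cases hc : c = c₀
    · simp [hc, F, N, r₀, c₀, dodgsonMatrix, bigM]
    · rw [Pi.add_apply, Pi.smul_apply, Pi.single_eq_of_ne hc, smul_zero, zero_add, map_apply,
        bind₁_dodgsonMatrix hkI hkJ, if_neg fun h' => hc h'.2]
  have hsingle : (N.updateRow r₀ (Pi.single c₀ 1)).det = 0 :=
    det_updateRow_dodgsonMatrix_eq_zero hT hkI hTI _ fun _ => Pi.single_eq_of_ne inr_ne_inl _
  symm
  calc N.det = (N.updateRow r₀ (N r₀)).det := by rw [updateRow_eq_self]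
    _ = X k * (N.updateRow r₀ (Pi.single c₀ 1)).det + (N.map F).det := by
      rw [hrow, det_updateRow_add, det_updateRow_smul, ← hFN]
    _ = F N.det := by rw [hsingle, mul_zero, zero_add, AlgHom.map_det]; rfl

end Dodgson

end

theorem dodgson_cut_set_general {V E : Type*} [Fintype V] [Fintype E]
    [DecidableEq V] [DecidableEq E] (head tail : E → V)
    (v₀ : V) (i j k : E)
    (hcut : ¬ ∀ u w : V, MGReach head tail ({i, j, k} : Set E)ᶜ u w) :
    (∀ (I J K : Finset E) (h : I.card = J.card),
      i ∈ I → j ∈ I → k ∈ I → dodgson head tail v₀ I J K h = 0) ∧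
    (∀ (I J K : Finset E) (h : I.card = J.card),
      i ∈ I → j ∈ I → k ∉ I → k ∉ J → k ∉ K →
        MvPolynomial.bind₁
            (fun e => if e = k then 0 else (MvPolynomial.X e : MvPolynomial E ℚ))
            (dodgson head tail v₀ I J K h) =
          dodgson head tail v₀ I J K h) := by
  constructor
  · intro I J K h hi hj hk
    rw [dodgson_eq_bind₁_det, det_dodgsonMatrix_eq_zero hcut (by simp [Set.insert_subset_iff, *]),
      map_zero]
  · intro I J K h hi hj hkI hkJ _
    rw [dodgson_eq_bind₁_det, bind₁_ite_X_comm,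
      bind₁_det_dodgsonMatrix hcut hkI hkJ (by simp [Set.insert_subset_iff, *])]

/-- If `{i,j,k}` is a 3-edge cut set of the connected graph `G` and `{i,j,k} ⊆ I`,
then `Ψ^{I,J}_{G,K} = 0`.  Consequently, if `{i,j} ⊆ I` and `k ∉ I ∪ J ∪ K`, then
`Ψ^{I,J}_{G,K}` is independent of the variable `a_k` (it is unchanged by setting
`a_k = 0`). -/
theorem dodgson_cut_set {V E : Type*} [Fintype V] [Fintype E]
    [DecidableEq V] [DecidableEq E] (head tail : E → V)
    (hconn : ∀ u w : V, MGReach head tail Set.univ u w)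
    (v₀ : V) (i j k : E)
    (hcut : ¬ ∀ u w : V, MGReach head tail ({i, j, k} : Set E)ᶜ u w) :
    (∀ (I J K : Finset E) (h : I.card = J.card),
      i ∈ I → j ∈ I → k ∈ I → dodgson head tail v₀ I J K h = 0) ∧
    (∀ (I J K : Finset E) (h : I.card = J.card),
      i ∈ I → j ∈ I → k ∉ I → k ∉ J → k ∉ K →
        MvPolynomial.bind₁
            (fun e => if e = k then 0 else (MvPolynomial.X e : MvPolynomial E ℚ))
            (dodgson head tail v₀ I J K h) =
          dodgson head tail v₀ I J K h) :=
  dodgson_cut_set_general head tail v₀ i j k hcut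
end

section
/- If {i,j,k} forms a triangle (a 3-cycle) in a connected graph G and {i,j,k} ⊆ (K ∪ I) ∖ J, then Ψ^{I,J}_{G,K} = 0. Consequently, if {i,j} ⊆ (K ∪ I) ∖ J and k ∉ I ∪ J ∪ K, then Ψ^{I,J}_{G,K} is divisible by a_k. -/
open Finset

open scoped Classical

/-- The edges `i`, `j`, `k` form a triangle (a 3-cycle) on three distinct vertices. -/
def IsTriangle {V E : Type*} (head tail : E → V) (i j k : E) : Prop :=
  i ≠ j ∧ j ≠ k ∧ i ≠ k ∧
  ∃ u₁ u₂ u₃ : V, u₁ ≠ u₂ ∧ u₂ ≠ u₃ ∧ u₁ ≠ u₃ ∧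
    s(head i, tail i) = s(u₁, u₂) ∧ s(head j, tail j) = s(u₂, u₃) ∧
    s(head k, tail k) = s(u₃, u₁)

private lemma sign_aux {V : Type*} [DecidableEq V] (R : Type*) [CommRing R] {hc tc a b : V}
    (hs : s(hc, tc) = s(a, b)) :
    ∃ ε : R, ε * ε = 1 ∧ ∀ u : V,
      ((if hc = u then (1 : R) else 0) - (if tc = u then 1 else 0)) =
      ε * ((if a = u then 1 else 0) - (if b = u then 1 else 0)) := by
  rw [Sym2.eq_iff] at hs
  rcases hs with ⟨rfl, rfl⟩ | ⟨rfl, rfl⟩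
  · exact ⟨1, by ring, fun u => by ring⟩
  · exact ⟨-1, by ring, fun u => by split_ifs <;> ring⟩

private lemma X_dvd_of_bind_eq_zero {E : Type*} [DecidableEq E] (k : E)
    (p : MvPolynomial E ℚ)
    (hp : MvPolynomial.bind₁
      (fun e => if e = k then 0 else MvPolynomial.X e) p = 0) :
    MvPolynomial.X k ∣ p := by
  have key : ∀ q : MvPolynomial E ℚ, MvPolynomial.X k ∣
      (q - MvPolynomial.bind₁
        (fun e => if e = k then (0 : MvPolynomial E ℚ) else MvPolynomial.X e) q) := by
    intro q
    induction q using MvPolynomial.induction_on with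
    | C a => simp
    | add p q hp hq =>
      have := dvd_add hp hq
      simpa [map_add, add_sub_add_comm] using this
    | mul_X p n ih =>
      rw [map_mul, MvPolynomial.bind₁_X_right]
      by_cases hnk : n = k
      · subst hnk
        simpa using dvd_mul_left (MvPolynomial.X k) p
      · rw [if_neg hnk]
        have heq : p * MvPolynomial.X n -
            (MvPolynomial.bind₁ (fun e => if e = k then (0 : MvPolynomial E ℚ)
              else MvPolynomial.X e)) p * MvPolynomial.X n =
            (p - (MvPolynomial.bind₁ (fun e => if e = k then (0 : MvPolynomial E ℚ)
              else MvPolynomial.X e)) p) * MvPolynomial.X n := by ring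
        rw [heq]
        exact ih.mul_right _
  have h2 := key p
  rwa [hp, sub_zero] at h2

private lemma dodgson_tri_zero {V E : Type*} [Fintype V] [Fintype E]
    [DecidableEq V] [DecidableEq E] (head tail : E → V) (v₀ : V) (i j k : E)
    (htri : IsTriangle head tail i j k) (I J K : Finset E) (h : I.card = J.card)
    (hi : i ∈ (K ∪ I) \ J) (hj : j ∈ (K ∪ I) \ J) (hk : k ∈ (K ∪ I) \ J) :
    dodgson head tail v₀ I J K h = 0 := by
  obtain ⟨hij, hjk, hik, u₁, u₂, u₃, -, -, -, hsi, hsj, hsk⟩ := htri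
  obtain ⟨εi, hεi2, hεi⟩ := sign_aux (MvPolynomial E ℚ) hsi
  obtain ⟨εj, hεj2, hεj⟩ := sign_aux (MvPolynomial E ℚ) hsj
  obtain ⟨εk, hεk2, hεk⟩ := sign_aux (MvPolynomial E ℚ) hsk
  rw [Finset.mem_sdiff] at hi hj hk
  set g : {e : E // e ∉ I} ≃ {e : E // e ∉ J} := notMemEquiv I J h with hg
  set B : Matrix ({e : E // e ∉ I} ⊕ {u : V // u ≠ v₀})
      ({e : E // e ∉ I} ⊕ {u : V // u ≠ v₀}) (MvPolynomial E ℚ) :=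
    (Matrix.of fun r c => bigM head tail v₀ (Sum.map Subtype.val id r)
        (Sum.map (fun x => ((g x : {e : E // e ∉ J}) : E)) id c)).map
      (MvPolynomial.bind₁ fun e => if e ∈ K then 0 else MvPolynomial.X e) with hB
  have hgoal : dodgson head tail v₀ I J K h = B.det := AlgHom.map_det _ _
  rw [hgoal, ← Matrix.det_transpose]
  have colB : ∀ (c : E) (hcJ : c ∉ J), c ∈ K ∪ I →
      ∀ r, B r (Sum.inl (g.symm ⟨c, hcJ⟩)) =
        Sum.elim (fun _ : {e : E // e ∉ I} => (0 : MvPolynomial E ℚ))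
          (fun u : {u : V // u ≠ v₀} =>
            -((if head c = u.1 then 1 else 0) - (if tail c = u.1 then 1 else 0))) r := by
    intro c hcJ hcKI r
    have hgc : ((g (g.symm ⟨c, hcJ⟩) : {e : E // e ∉ J}) : E) = c := by
      rw [Equiv.apply_symm_apply]
    cases r with
    | inl e =>
      simp only [hB, Matrix.map_apply, Matrix.of_apply, Sum.map_inl, Sum.elim_inl, hgc,
        bigM, Matrix.fromBlocks_apply₁₁, Matrix.diagonal_apply]
      by_cases hec : (e : E) = c
      · have hcK : c ∈ K := by
          rcases Finset.mem_union.mp hcKI with h' | h'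
          · exact h'
          · exact absurd (hec ▸ h') e.property
        simp [hec, hcK]
      · simp [hec]
    | inr u =>
      simp only [hB, Matrix.map_apply, Matrix.of_apply, Sum.map_inr, Sum.map_inl, id,
        hgc, Sum.elim_inr, bigM, Matrix.fromBlocks_apply₂₁, Matrix.neg_apply, redInc,
        map_neg, map_sub, apply_ite (MvPolynomial.bind₁
          fun e => if e ∈ K then (0 : MvPolynomial E ℚ) else MvPolynomial.X e),
        map_one, map_zero]
  set xi : {e : E // e ∉ I} ⊕ {u : V // u ≠ v₀} := Sum.inl (g.symm ⟨i, hi.2⟩) with hxi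
  set xj : {e : E // e ∉ I} ⊕ {u : V // u ≠ v₀} := Sum.inl (g.symm ⟨j, hj.2⟩) with hxj
  set xk : {e : E // e ∉ I} ⊕ {u : V // u ≠ v₀} := Sum.inl (g.symm ⟨k, hk.2⟩) with hxk
  have hxij : xi ≠ xj := fun hEq =>
    hij (Subtype.mk_eq_mk.mp (g.symm.injective (Sum.inl_injective hEq)))
  have hxik : xi ≠ xk := fun hEq =>
    hik (Subtype.mk_eq_mk.mp (g.symm.injective (Sum.inl_injective hEq)))
  have hcomb : ∀ r, εi * B r xi + εj * B r xj + εk * B r xk = 0 := by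
    intro r
    rw [hxi, hxj, hxk, colB i hi.2 hi.1 r, colB j hj.2 hj.1 r, colB k hk.2 hk.1 r]
    cases r with
    | inl e => simp
    | inr u =>
      simp only [Sum.elim_inr]
      rw [hεi u.1, hεj u.1, hεk u.1]
      linear_combination
        (-((if u₁ = u.1 then (1 : MvPolynomial E ℚ) else 0) -
            (if u₂ = u.1 then 1 else 0))) * hεi2 +
        (-((if u₂ = u.1 then (1 : MvPolynomial E ℚ) else 0) -
            (if u₃ = u.1 then 1 else 0))) * hεj2 +
        (-((if u₃ = u.1 then (1 : MvPolynomial E ℚ) else 0) -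
            (if u₁ = u.1 then 1 else 0))) * hεk2
  have key : ∀ r, B.transpose xi r + (εi * εj) * B.transpose xj r + (εi * εk) * B.transpose xk r = 0 := by
    intro r
    simp only [Matrix.transpose_apply]
    linear_combination εi * hcomb r - (B r xi) * hεi2
  have e1 := Matrix.det_updateRow_add_smul_self B.transpose hxij (εi * εj)
  set M₁ := Matrix.updateRow B.transpose xi (B.transpose xi + (εi * εj) • B.transpose xj) with hM₁
  have e2 := Matrix.det_updateRow_add_smul_self M₁ hxik (εi * εk)
  rw [← e1, ← e2]
  apply Matrix.det_eq_zero_of_row_eq_zero xi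
  intro r
  rw [Matrix.updateRow_self]
  have hM₁i : M₁ xi = B.transpose xi + (εi * εj) • B.transpose xj := Matrix.updateRow_self
  have hM₁k : M₁ xk = B.transpose xk := Matrix.updateRow_ne (Ne.symm hxik)
  rw [hM₁i, hM₁k]
  simpa [Pi.add_apply, Pi.smul_apply, smul_eq_mul, add_assoc] using key r

/-- If `{i,j,k}` is a triangle of the connected graph `G` and
`{i,j,k} ⊆ (K ∪ I) ∖ J`, then `Ψ^{I,J}_{G,K} = 0`.  Consequently, if
`{i,j} ⊆ (K ∪ I) ∖ J` and `k ∉ I ∪ J ∪ K`, then `Ψ^{I,J}_{G,K}` is divisible by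
`a_k`. -/
theorem dodgson_triangle {V E : Type*} [Fintype V] [Fintype E]
    [DecidableEq V] [DecidableEq E] (head tail : E → V)
    (hconn : ∀ u w : V, MGReach head tail Set.univ u w)
    (v₀ : V) (i j k : E) (htri : IsTriangle head tail i j k) :
    (∀ (I J K : Finset E) (h : I.card = J.card),
      i ∈ (K ∪ I) \ J → j ∈ (K ∪ I) \ J → k ∈ (K ∪ I) \ J →
        dodgson head tail v₀ I J K h = 0) ∧
    (∀ (I J K : Finset E) (h : I.card = J.card),
      i ∈ (K ∪ I) \ J → j ∈ (K ∪ I) \ J → k ∉ I → k ∉ J → k ∉ K →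
        MvPolynomial.X k ∣ dodgson head tail v₀ I J K h) := by
  constructor
  · intro I J K h hi hj hk
    exact dodgson_tri_zero head tail v₀ i j k htri I J K h hi hj hk
  · intro I J K h hi hj hkI hkJ hkK
    rw [Finset.mem_sdiff] at hi hj
    have hzero : dodgson head tail v₀ I J (insert k K) h = 0 := by
      apply dodgson_tri_zero head tail v₀ i j k htri I J (insert k K) h
      · exact Finset.mem_sdiff.mpr ⟨Finset.mem_union.mpr (by
          rcases Finset.mem_union.mp hi.1 with h' | h'
          · exact Or.inl (Finset.mem_insert_of_mem h')
          · exact Or.inr h'), hi.2⟩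
      · exact Finset.mem_sdiff.mpr ⟨Finset.mem_union.mpr (by
          rcases Finset.mem_union.mp hj.1 with h' | h'
          · exact Or.inl (Finset.mem_insert_of_mem h')
          · exact Or.inr h'), hj.2⟩
      · exact Finset.mem_sdiff.mpr
          ⟨Finset.mem_union_left _ (Finset.mem_insert_self k K), hkJ⟩
    apply X_dvd_of_bind_eq_zero k
    have hrel : MvPolynomial.bind₁
        (fun e => if e = k then (0 : MvPolynomial E ℚ) else MvPolynomial.X e)
        (dodgson head tail v₀ I J K h) = dodgson head tail v₀ I J (insert k K) h := by
      unfold dodgson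
      rw [MvPolynomial.bind₁_bind₁]
      have hfun : (fun e : E => (MvPolynomial.bind₁
          (fun e' : E => if e' = k then (0 : MvPolynomial E ℚ) else MvPolynomial.X e'))
            (if e ∈ K then 0 else MvPolynomial.X e)) =
          (fun e : E => if e ∈ insert k K then (0 : MvPolynomial E ℚ)
            else MvPolynomial.X e) := by
        funext e
        by_cases heK : e ∈ K
        · simp [heK, Finset.mem_insert]
        · by_cases hek : e = k <;>
            simp [heK, hek, hkK, MvPolynomial.bind₁_X_right, Finset.mem_insert]
      rw [hfun]
    rw [hrel, hzero]
end

section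
/- Let s be a nonzero integer and suppose the coefficients γ_k(x) = Σ_{i≥1} γ_{k,i} x^i of formal power series satisfy the renormalization group recursion k·γ_k(x) = γ_1(x)(sgn(s) + |s| x d/dx) γ_{k−1}(x) for k ≥ 2, and similarly for primed quantities γ'_k. If P(x) := −γ_1(x) − 2γ_2(x) and P'(x) := −γ'_1(x) − 2γ'_2(x) are equal as formal power series, then γ_{1,i} = γ'_{1,i} for all i ≥ 1, and hence γ_k = γ'_k for all k. -/
/-- The renormalization group recursion determines all the `γ_k` from `γ_1`, and
`P(x) = -γ_1(x) - 2γ_2(x)` determines `γ_1`:  if two families `γ`, `γ'` of formal power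
series (given by their coefficients `γ k i`, with zero constant terms) both satisfy
`k·γ_k = γ_1·(sgn(s) + |s|·x·d/dx)·γ_{k-1}` for `k ≥ 2`, and the series
`-γ_1 - 2γ_2` and `-γ'_1 - 2γ'_2` agree, then `γ_1 = γ'_1` and hence `γ_k = γ'_k`
for all `k ≥ 1`. -/
theorem rg_recursion_uniqueness (s : ℤ) (hs : s ≠ 0)
    (γ γ' : ℕ → ℕ → ℝ)
    (hz : ∀ k, γ k 0 = 0) (hz' : ∀ k, γ' k 0 = 0)
    (hrec : ∀ k : ℕ, 2 ≤ k → ∀ i, (k : ℝ) * γ k i =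
      ∑ j ∈ Finset.range (i + 1),
        γ 1 j * ((s.sign : ℝ) + (|s| : ℝ) * ((i - j : ℕ) : ℝ)) * γ (k - 1) (i - j))
    (hrec' : ∀ k : ℕ, 2 ≤ k → ∀ i, (k : ℝ) * γ' k i =
      ∑ j ∈ Finset.range (i + 1),
        γ' 1 j * ((s.sign : ℝ) + (|s| : ℝ) * ((i - j : ℕ) : ℝ)) * γ' (k - 1) (i - j))
    (hP : ∀ i, -γ 1 i - 2 * γ 2 i = -γ' 1 i - 2 * γ' 2 i) :
    (∀ i, γ 1 i = γ' 1 i) ∧ (∀ k, 1 ≤ k → ∀ i, γ k i = γ' k i) := by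
  have key : ∀ i, γ 1 i = γ' 1 i := by
    intro i
    induction i using Nat.strong_induction_on with
    | _ i ih =>
      match i with
      | 0 => rw [hz, hz']
      | (n+1) =>
        have h2 := hrec 2 le_rfl (n+1)
        have h2' := hrec' 2 le_rfl (n+1)
        have hsum : ∀ j ∈ Finset.range (n + 1 + 1),
            γ 1 j * ((s.sign : ℝ) + (|s| : ℝ) * ((n + 1 - j : ℕ) : ℝ)) * γ (2-1) (n + 1 - j)
            = γ' 1 j * ((s.sign : ℝ) + (|s| : ℝ) * ((n + 1 - j : ℕ) : ℝ)) * γ' (2-1) (n + 1 - j) := by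
          intro j hj
          simp only [Finset.mem_range] at hj
          rcases Nat.eq_zero_or_pos j with h0 | hpos
          · subst h0; rw [hz, hz']; ring
          rcases eq_or_lt_of_le (Nat.lt_succ_iff.mp hj) with heq | hlt
          · have h0 : n + 1 - j = 0 := by omega
            rw [h0, hz, hz']; ring
          · rw [ih j (by omega), ih (n+1-j) (by omega)]
        have hS : (2:ℝ) * γ 2 (n+1) = (2:ℝ) * γ' 2 (n+1) := by
          rw [show ((2:ℕ):ℝ) = (2:ℝ) by norm_num] at h2 h2'
          rw [h2, h2']
          exact Finset.sum_congr rfl hsum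
        have := hP (n+1)
        linarith
  refine ⟨key, ?_⟩
  intro k
  induction k with
  | zero => omega
  | succ k ihk =>
    intro hk i
    rcases Nat.lt_or_ge k 1 with h1 | h1
    · interval_cases k
      exact key i
    · have hk2 : 2 ≤ k + 1 := by omega
      have h := hrec (k+1) hk2 i
      have h' := hrec' (k+1) hk2 i
      have hsum : ∑ j ∈ Finset.range (i + 1),
          γ 1 j * ((s.sign : ℝ) + (|s| : ℝ) * ((i - j : ℕ) : ℝ)) * γ (k+1-1) (i - j)
          = ∑ j ∈ Finset.range (i + 1),
          γ' 1 j * ((s.sign : ℝ) + (|s| : ℝ) * ((i - j : ℕ) : ℝ)) * γ' (k+1-1) (i - j) := by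
        refine Finset.sum_congr rfl fun j _ => ?_
        rw [key j, Nat.add_sub_cancel, ihk h1 (i - j)]
      have hne : ((k+1 : ℕ) : ℝ) ≠ 0 := by positivity
      have : ((k+1 : ℕ) : ℝ) * γ (k+1) i = ((k+1 : ℕ) : ℝ) * γ' (k+1) i := by
        rw [h, h']; simpa using hsum
      exact mul_left_cancel₀ hne this
end
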